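/- arXiv:2311.15910 — 2 statements merged into one kernel-verified Lean document; each statement's English description precedes it below -/
import Mathlib

section
/- Let n ≥ 2 be an integer, K a field, and R_n the rose graph with n petals. For every P ∈ GL_n(K), the K-algebra homomorphism θ_P : L_K(R_n) → L_K(R_n)^{φ_P}, defined by θ_P(v) = v, θ_P(e_i) = e_i and θ_P(e_i*) = Σ_{k=1}^n p_{ik} e_k*, is an isomorphism; in other words, the Zhang twist of L_K(R_n) by the graded automorphism φ_P is isomorphic to L_K(R_n). -/
/-- Generators of the Leavitt path algebra of the rose with `n` petals:
the edges `e_1, …, e_n` and the ghost edges `e_1*, …, e_n*` (the single vertex `v` is the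
identity `1`). -/
inductive RGen (n : ℕ) : Type
  | e : Fin n → RGen n
  | g : Fin n → RGen n

/-- The defining relations of `L_K(R_n)`: `e_i* e_j = δ_{ij} v` and `Σ_i e_i e_i* = v`,
where `v = 1`. -/
inductive RoseRel (K : Type) [Field K] (n : ℕ) :
    FreeAlgebra K (RGen n) → FreeAlgebra K (RGen n) → Prop
  | ghostEdgeSame (i : Fin n) :
      RoseRel K n (FreeAlgebra.ι K (RGen.g i) * FreeAlgebra.ι K (RGen.e i)) 1
  | ghostEdgeNe (i j : Fin n) (h : i ≠ j) :
      RoseRel K n (FreeAlgebra.ι K (RGen.g i) * FreeAlgebra.ι K (RGen.e j)) 0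
  | ck2 :
      RoseRel K n (∑ i : Fin n, FreeAlgebra.ι K (RGen.e i) * FreeAlgebra.ι K (RGen.g i)) 1

/-- The Leavitt path algebra `L_K(R_n)` of the rose with `n` petals. -/
abbrev LRose (K : Type) [Field K] (n : ℕ) : Type := RingQuot (RoseRel K n)

/-- The edge `e_i` as an element of `L_K(R_n)`. -/
noncomputable def ee (K : Type) [Field K] (n : ℕ) (i : Fin n) : LRose K n :=
  RingQuot.mkAlgHom K (RoseRel K n) (FreeAlgebra.ι K (RGen.e i))

/-- The ghost edge `e_i*` as an element of `L_K(R_n)`. -/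
noncomputable def gg (K : Type) [Field K] (n : ℕ) (i : Fin n) : LRose K n :=
  RingQuot.mkAlgHom K (RoseRel K n) (FreeAlgebra.ι K (RGen.g i))

/-- The degree `d` component of the ℤ-grading of `L_K(R_n)`: the `K`-span of the
elements `p q*` with `|p| - |q| = d`. -/
noncomputable def rComponent (K : Type) [Field K] (n : ℕ) (d : ℤ) :
    Submodule K (LRose K n) :=
  Submodule.span K {x : LRose K n | ∃ p q : List (Fin n),
    (p.length : ℤ) - (q.length : ℤ) = d ∧
    x = (p.map (ee K n)).prod * (q.reverse.map (gg K n)).prod}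

/-- A map is graded when it preserves every homogeneous component. -/
def RGraded (K : Type) [Field K] (n : ℕ) (f : LRose K n → LRose K n) : Prop :=
  ∀ d : ℤ, ∀ x ∈ rComponent K n d, f x ∈ rComponent K n d

/-- The defining property of the endomorphism `φ_P` of `L_K(R_n)` attached to a matrix
`P` with inverse `P'`: it sends `e_i ↦ Σ_k e_k p_{k i}` and `e_i* ↦ Σ_k p'_{i k} e_k*`
(and `v = 1 ↦ 1` automatically). -/
def RPhiProps (K : Type) [Field K] (n : ℕ) (P P' : Matrix (Fin n) (Fin n) (LRose K n))
    (φ : LRose K n →ₐ[K] LRose K n) : Prop :=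
  (∀ i, φ (ee K n i) = ∑ k, ee K n k * P k i) ∧
  (∀ i, φ (gg K n i) = ∑ k, P' i k * gg K n k)

/-!
Both `θ` and its inverse are twist maps: linear maps `f` with `f 1 = 1`,
`f (e_i z) = e_i σ (f z)` and `f (e_i* z) = τ (e_i* f z)` for mutually inverse automorphisms
`σ, τ` (for `θ`, `σ = φ_P`). A twist map exists for every such pair: it is `x ↦ x • 1` for the
representation of `L_K(R_n)` on itself in which `e_i` acts by `y ↦ e_i σ y` and `e_i*` by
`y ↦ τ (e_i* y)`; these operators satisfy the Leavitt relations precisely because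
`σ τ = τ σ = id`. A twist map commutes with every automorphism that commutes with `σ, τ` and
preserves the spans of the `e_i` and of the `e_i*`, as `φ_P^{±1}` do; then a twist map for
`(τ, σ)` is a two-sided inverse of one for `(σ, τ)`, which is checked on the generators.
-/

open Submodule Set

namespace LRose

variable {K : Type} [Field K] {n : ℕ}

theorem gg_mul_ee_self (i : Fin n) : gg K n i * ee K n i = 1 := by
  rw [gg, ee, ← map_mul, ← map_one (RingQuot.mkAlgHom K (RoseRel K n))]
  exact RingQuot.mkAlgHom_rel K (RoseRel.ghostEdgeSame i)

theorem gg_mul_ee_of_ne {i j : Fin n} (h : i ≠ j) : gg K n i * ee K n j = 0 := by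
  rw [gg, ee, ← map_mul, ← map_zero (RingQuot.mkAlgHom K (RoseRel K n))]
  exact RingQuot.mkAlgHom_rel K (RoseRel.ghostEdgeNe i j h)

theorem sum_ee_mul_gg : ∑ i : Fin n, ee K n i * gg K n i = 1 := by
  have := RingQuot.mkAlgHom_rel K (RoseRel.ck2 (K := K) (n := n))
  rw [map_sum, map_one] at this
  simpa [ee, gg, map_mul] using this

theorem linearMap_ext {M : Type*} [AddCommGroup M] [Module K M] {F G : LRose K n →ₗ[K] M}
    (h1 : F 1 = G 1) (hee : ∀ i z, F z = G z → F (ee K n i * z) = G (ee K n i * z))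
    (hgg : ∀ i z, F z = G z → F (gg K n i * z) = G (gg K n i * z)) : F = G := by
  have key : ∀ (a : FreeAlgebra K (RGen n)) z,
      F z = G z → F (RingQuot.mkAlgHom K (RoseRel K n) a * z) =
        G (RingQuot.mkAlgHom K (RoseRel K n) a * z) := by
    intro a
    induction a with
    | grade0 c => intro z hz; simp only [AlgHom.commutes, ← Algebra.smul_def, map_smul, hz]
    | grade1 c => cases c with | e i => exact hee i | g i => exact hgg i
    | mul a b ha hb =>
      intro z hz
      rw [map_mul (RingQuot.mkAlgHom K (RoseRel K n)), mul_assoc]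
      exact ha _ (hb z hz)
    | add a b ha hb => intro z hz; simp only [map_add, add_mul, ha z hz, hb z hz]
  ext x
  obtain ⟨a, rfl⟩ := RingQuot.mkAlgHom_surjective K (RoseRel K n) x
  simpa using key a 1 h1

/-- For `τ = σ⁻¹`, these are the identities of an algebra map `L_K(R_n) → L_K(R_n)^σ` into the
Zhang twist fixing every `e_i` and sending `e_i*` to `τ e_i*`. -/
structure IsTwistHom (σ τ : LRose K n →ₐ[K] LRose K n) (f : LRose K n →ₗ[K] LRose K n) :
    Prop where
  map_one : f 1 = 1
  map_ee_mul (i : Fin n) (z : LRose K n) : f (ee K n i * z) = ee K n i * σ (f z)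
  map_gg_mul (i : Fin n) (z : LRose K n) : f (gg K n i * z) = τ (gg K n i * f z)

theorem exists_isTwistHom (σ τ : LRose K n →ₐ[K] LRose K n) (hστ : ∀ x, σ (τ x) = x)
    (hτσ : ∀ x, τ (σ x) = x) : ∃ f, IsTwistHom σ τ f := by
  let act : RGen n → Module.End K (LRose K n)
    | .e i => LinearMap.mulLeft K (ee K n i) ∘ₗ σ.toLinearMap
    | .g i => τ.toLinearMap ∘ₗ LinearMap.mulLeft K (gg K n i)
  have hrel : ∀ ⦃x y⦄, RoseRel K n x y → FreeAlgebra.lift K act x = FreeAlgebra.lift K act y := by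
    rintro _ _ (i | ⟨i, j, hij⟩ | _) <;> ext y
    · simp [act, ← mul_assoc, gg_mul_ee_self, hτσ]
    · simp [act, ← mul_assoc, gg_mul_ee_of_ne hij]
    · simp [act, LinearMap.sum_apply, hστ, ← mul_assoc, ← Finset.sum_mul, sum_ee_mul_gg]
  let rep := RingQuot.liftAlgHom K ⟨FreeAlgebra.lift K act, hrel⟩
  refine ⟨LinearMap.applyₗ 1 ∘ₗ rep.toLinearMap, ?_, fun i z => ?_, fun i z => ?_⟩
  · simp
  · simp [rep, act, ee]
  · simp [rep, act, gg]

namespace IsTwistHom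

variable {σ τ : LRose K n →ₐ[K] LRose K n} {f : LRose K n →ₗ[K] LRose K n}

theorem map_mul_of_mem_span_ee (hf : IsTwistHom σ τ f) {y : LRose K n}
    (hy : y ∈ span K (range (ee K n))) (z : LRose K n) : f (y * z) = y * σ (f z) := by
  induction hy using span_induction with
  | mem _ hx => obtain ⟨i, rfl⟩ := hx; exact hf.map_ee_mul i z
  | zero => simp
  | add a b _ _ ha hb => rw [add_mul, map_add, ha, hb, add_mul]
  | smul c a _ ha => rw [smul_mul_assoc, map_smul, ha, smul_mul_assoc]

theorem map_mul_of_mem_span_gg (hf : IsTwistHom σ τ f) {y : LRose K n}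
    (hy : y ∈ span K (range (gg K n))) (z : LRose K n) : f (y * z) = τ (y * f z) := by
  induction hy using span_induction with
  | mem _ hx => obtain ⟨i, rfl⟩ := hx; exact hf.map_gg_mul i z
  | zero => simp
  | add a b _ _ ha hb => rw [add_mul, map_add, ha, hb, add_mul, map_add]
  | smul c a _ ha => rw [smul_mul_assoc, map_smul, ha, smul_mul_assoc, map_smul]

theorem map_comm (hf : IsTwistHom σ τ f) {ψ : LRose K n →ₐ[K] LRose K n}
    (hψσ : ∀ x, ψ (σ x) = σ (ψ x)) (hψτ : ∀ x, ψ (τ x) = τ (ψ x))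
    (hψe : ∀ i, ψ (ee K n i) ∈ span K (range (ee K n)))
    (hψg : ∀ i, ψ (gg K n i) ∈ span K (range (gg K n))) (x : LRose K n) :
    f (ψ x) = ψ (f x) := by
  suffices f ∘ₗ ψ.toLinearMap = ψ.toLinearMap ∘ₗ f from LinearMap.congr_fun this x
  refine linearMap_ext ?_ (fun i z hz => ?_) (fun i z hz => ?_)
  · simp [hf.map_one]
  · simp only [LinearMap.comp_apply, AlgHom.toLinearMap_apply] at hz ⊢
    rw [map_mul, hf.map_mul_of_mem_span_ee (hψe i), hz, ← hψσ, ← map_mul, hf.map_ee_mul]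
  · simp only [LinearMap.comp_apply, AlgHom.toLinearMap_apply] at hz ⊢
    rw [map_mul, hf.map_mul_of_mem_span_gg (hψg i), hz, ← map_mul, ← hψτ, hf.map_gg_mul]

theorem leftInverse {h : LRose K n →ₗ[K] LRose K n} (hf : IsTwistHom σ τ f)
    (hh : IsTwistHom τ σ h) (hτσ : ∀ x, τ (σ x) = x) (hhσ : ∀ x, h (σ x) = σ (h x))
    (hhτ : ∀ x, h (τ x) = τ (h x)) : Function.LeftInverse h f := by
  suffices h ∘ₗ f = LinearMap.id from LinearMap.congr_fun this
  refine linearMap_ext ?_ (fun i z hz => ?_) (fun i z hz => ?_)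
  · simp only [LinearMap.comp_apply, LinearMap.id_apply]
    rw [hf.map_one, hh.map_one]
  · simp only [LinearMap.comp_apply, LinearMap.id_apply] at hz ⊢
    rw [hf.map_ee_mul, hh.map_ee_mul, hhσ, hz, hτσ]
  · simp only [LinearMap.comp_apply, LinearMap.id_apply] at hz ⊢
    rw [hf.map_gg_mul, hhτ, hh.map_gg_mul, hz, hτσ]

theorem bijective (hf : IsTwistHom σ τ f) (hστ : ∀ x, σ (τ x) = x) (hτσ : ∀ x, τ (σ x) = x)
    (hσe : ∀ i, σ (ee K n i) ∈ span K (range (ee K n)))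
    (hσg : ∀ i, σ (gg K n i) ∈ span K (range (gg K n)))
    (hτe : ∀ i, τ (ee K n i) ∈ span K (range (ee K n)))
    (hτg : ∀ i, τ (gg K n i) ∈ span K (range (gg K n))) : Function.Bijective f := by
  obtain ⟨h, hh⟩ := exists_isTwistHom τ σ hτσ hστ
  have hcomm : ∀ x, σ (τ x) = τ (σ x) := fun x => by rw [hστ, hτσ]
  have hfσ := hf.map_comm (ψ := σ) (fun _ => rfl) hcomm hσe hσg
  have hfτ := hf.map_comm (ψ := τ) (fun x => (hcomm x).symm) (fun _ => rfl) hτe hτg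
  have hhσ := hh.map_comm (ψ := σ) hcomm (fun _ => rfl) hσe hσg
  have hhτ := hh.map_comm (ψ := τ) (fun _ => rfl) (fun x => (hcomm x).symm) hτe hτg
  exact ⟨(hf.leftInverse hh hτσ hhσ hhτ).injective, (hh.leftInverse hf hστ hfτ hfσ).surjective⟩

end IsTwistHom

end LRose

theorem RPhiProps.map_ee_mem_span {K : Type} [Field K] {n : ℕ} {P P' : Matrix (Fin n) (Fin n) K}
    {φ : LRose K n →ₐ[K] LRose K n}
    (hφ : RPhiProps K n (P.map (algebraMap K _)) (P'.map (algebraMap K _)) φ) (i : Fin n) :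
    φ (ee K n i) ∈ span K (range (ee K n)) := by
  rw [hφ.1 i]
  refine sum_mem fun k _ => ?_
  rw [Matrix.map_apply, ← Algebra.commutes, ← Algebra.smul_def]
  exact smul_mem _ _ (subset_span ⟨k, rfl⟩)

theorem RPhiProps.map_gg_mem_span {K : Type} [Field K] {n : ℕ} {P P' : Matrix (Fin n) (Fin n) K}
    {φ : LRose K n →ₐ[K] LRose K n}
    (hφ : RPhiProps K n (P.map (algebraMap K _)) (P'.map (algebraMap K _)) φ) (i : Fin n) :
    φ (gg K n i) ∈ span K (range (gg K n)) := by
  rw [hφ.2 i]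
  refine sum_mem fun k _ => ?_
  rw [Matrix.map_apply, ← Algebra.smul_def]
  exact smul_mem _ _ (subset_span ⟨k, rfl⟩)

theorem stmt15_general (K : Type) [Field K] (n : ℕ)
    (P : GL (Fin n) K)
    (φP φP' : LRose K n →ₐ[K] LRose K n)
    (hφP : RPhiProps K n
      (((P : Matrix (Fin n) (Fin n) K)).map (algebraMap K (LRose K n)))
      ((((P⁻¹ : GL (Fin n) K) : Matrix (Fin n) (Fin n) K)).map (algebraMap K (LRose K n))) φP)
    (hφP' : RPhiProps K n
      ((((P⁻¹ : GL (Fin n) K) : Matrix (Fin n) (Fin n) K)).map (algebraMap K (LRose K n)))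
      (((P : Matrix (Fin n) (Fin n) K)).map (algebraMap K (LRose K n))) φP')
    (hinv : ∀ x, φP (φP' x) = x ∧ φP' (φP x) = x)
    (θ : LRose K n →ₗ[K] LRose K n)
    (hone : θ 1 = 1)
    (hmulPos : ∀ m : ℕ, ∀ a ∈ rComponent K n (m : ℤ), ∀ b,
      θ (a * b) = θ a * (⇑φP)^[m] (θ b))
    (hmulNeg : ∀ m : ℕ, ∀ a ∈ rComponent K n (-(m : ℤ)), ∀ b,
      θ (a * b) = θ a * (⇑φP')^[m] (θ b))
    (hθe : ∀ i, θ (ee K n i) = ee K n i)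
    (hθg : ∀ i, θ (gg K n i) =
      ∑ k, algebraMap K (LRose K n) ((P : Matrix (Fin n) (Fin n) K) i k) * gg K n k) :
    Function.Bijective ⇑θ := by
  have hθg' : ∀ i, θ (gg K n i) = φP' (gg K n i) := fun i => by
    simp only [hθg, hφP'.2 i, Matrix.map_apply]
  have hθ : LRose.IsTwistHom φP φP' θ := by
    refine ⟨hone, fun i z => ?_, fun i z => ?_⟩
    · have := hmulPos 1 (ee K n i) (subset_span ⟨[i], [], by simp, by simp⟩) z
      rwa [Function.iterate_one, hθe] at this
    · have := hmulNeg 1 (gg K n i) (subset_span ⟨[], [i], by simp, by simp⟩) z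
      rwa [Function.iterate_one, hθg', ← map_mul] at this
  exact hθ.bijective (fun x => (hinv x).1) (fun x => (hinv x).2) hφP.map_ee_mem_span
    hφP.map_gg_mem_span hφP'.map_ee_mem_span hφP'.map_gg_mem_span

/-- For every `P ∈ GL_n(K)`, the homomorphism
`θ_P : L_K(R_n) → L_K(R_n)^{φ_P}` determined by `θ_P(1) = 1`, `θ_P(e_i) = e_i`,
`θ_P(e_i*) = Σ_k p_{ik} e_k*` is an isomorphism: the Zhang twist of `L_K(R_n)` by `φ_P`
is isomorphic to `L_K(R_n)`. -/
theorem stmt15 (K : Type) [Field K] (n : ℕ) (hn : 2 ≤ n)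
    (P : GL (Fin n) K)
    (φP φP' : LRose K n →ₐ[K] LRose K n)
    (hφP : RPhiProps K n
      (((P : Matrix (Fin n) (Fin n) K)).map (algebraMap K (LRose K n)))
      ((((P⁻¹ : GL (Fin n) K) : Matrix (Fin n) (Fin n) K)).map (algebraMap K (LRose K n))) φP)
    (hφP' : RPhiProps K n
      ((((P⁻¹ : GL (Fin n) K) : Matrix (Fin n) (Fin n) K)).map (algebraMap K (LRose K n)))
      (((P : Matrix (Fin n) (Fin n) K)).map (algebraMap K (LRose K n))) φP')
    (hinv : ∀ x, φP (φP' x) = x ∧ φP' (φP x) = x)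
    (θ : LRose K n →ₗ[K] LRose K n)
    (hone : θ 1 = 1)
    (hmulPos : ∀ m : ℕ, ∀ a ∈ rComponent K n (m : ℤ), ∀ b,
      θ (a * b) = θ a * (⇑φP)^[m] (θ b))
    (hmulNeg : ∀ m : ℕ, ∀ a ∈ rComponent K n (-(m : ℤ)), ∀ b,
      θ (a * b) = θ a * (⇑φP')^[m] (θ b))
    (hθe : ∀ i, θ (ee K n i) = ee K n i)
    (hθg : ∀ i, θ (gg K n i) =
      ∑ k, algebraMap K (LRose K n) ((P : Matrix (Fin n) (Fin n) K) i k) * gg K n k) :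
    Function.Bijective ⇑θ :=
  stmt15_general K n P φP φP' hφP hφP' hinv θ hone hmulPos hmulNeg hθe hθg
end

section
/- Let n ≥ 2 be an integer, K a field, R_n the rose graph with n petals, P = (p_{ij}) ∈ GL_n(K), and let α = e_{i_1} e_{i_2} ⋯ e_{i_m} ⋯ be an irrational infinite path in R_n in which every edge occurs infinitely often. Then the twisted Chen module V^P_{[α]} is isomorphic as a left L_K(R_n)-module to the quotient L_K(R_n) / ⊕_{m=0}^∞ L_K(R_n)(φ_P(ε_m) − φ_P(ε_{m+1})), where ε_0 := v and ε_m := e_{i_1} ⋯ e_{i_m} e_{i_m}* ⋯ e_{i_1}* for m ≥ 1. Consequently, V^P_{[α]} is a simple left L_K(R_n)-module that is not finitely presented. -/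
/-- An infinite path in the rose `R_n` is a sequence `ℕ → Fin n` of edges.
Two infinite paths are tail-equivalent if they agree after deleting suitable finite
initial segments. -/
def TailEq (n : ℕ) (β γ : ℕ → Fin n) : Prop :=
  ∃ m k : ℕ, ∀ t, β (m + t) = γ (k + t)

/-- Prepend the edge `i` to an infinite path. -/
def consSeq {n : ℕ} (i : Fin n) (β : ℕ → Fin n) : ℕ → Fin n :=
  fun t => Nat.casesOn t i β

/-- Delete the first edge of an infinite path. -/
def shiftSeq {n : ℕ} (β : ℕ → Fin n) : ℕ → Fin n :=
  fun t => β (t + 1)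

/-- An infinite path in `R_n` is rational iff it is tail-equivalent to `c^∞` for a
closed path `c`, i.e. iff it is eventually periodic. -/
def RationalSeq (n : ℕ) (α : ℕ → Fin n) : Prop :=
  ∃ p m : ℕ, 0 < p ∧ ∀ t, m ≤ t → α (t + p) = α t

/-- Every edge of `R_n` occurs infinitely often in the infinite path `α`. -/
def EdgeRich (n : ℕ) (α : ℕ → Fin n) : Prop :=
  ∀ j : Fin n, ∀ m : ℕ, ∃ t, m ≤ t ∧ α t = j

def appendSeq {n : ℕ} (l : List (Fin n)) (β : ℕ → Fin n) : ℕ → Fin n :=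
  l.foldr consSeq β

def takeSeq {n : ℕ} (m : ℕ) (β : ℕ → Fin n) : List (Fin n) :=
  (List.range m).map β

def dropSeq {n : ℕ} (m : ℕ) (β : ℕ → Fin n) : ℕ → Fin n :=
  fun t => β (t + m)

section InfinitePaths

variable {n : ℕ}

@[simp] lemma appendSeq_nil (β : ℕ → Fin n) : appendSeq [] β = β := rfl

@[simp] lemma appendSeq_cons (i : Fin n) (l : List (Fin n)) (β : ℕ → Fin n) :
    appendSeq (i :: l) β = consSeq i (appendSeq l β) := rfl

lemma appendSeq_apply (l : List (Fin n)) (β : ℕ → Fin n) (t : ℕ) :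
    appendSeq l β t = if h : t < l.length then l[t] else β (t - l.length) := by
  induction l generalizing t with
  | nil => simp
  | cons i l ih =>
    cases t with
    | zero => rfl
    | succ t => simp [consSeq, ih, Nat.succ_sub_succ]

@[simp] lemma length_takeSeq (m : ℕ) (β : ℕ → Fin n) : (takeSeq m β).length = m := by
  simp [takeSeq]

@[simp] lemma getElem_takeSeq (m : ℕ) (β : ℕ → Fin n) (t : ℕ) (ht : t < (takeSeq m β).length) :
    (takeSeq m β)[t] = β t := by
  simp [takeSeq]

lemma takeSeq_succ (m : ℕ) (β : ℕ → Fin n) :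
    takeSeq (m + 1) β = β 0 :: takeSeq m (shiftSeq β) := by
  simp [takeSeq, List.range_succ_eq_map, shiftSeq]

lemma takeSeq_add (m k : ℕ) (β : ℕ → Fin n) :
    takeSeq (m + k) β = takeSeq m β ++ takeSeq k (dropSeq m β) := by
  simp [takeSeq, dropSeq, List.range_add, Nat.add_comm]

lemma takeSeq_eq_takeSeq_iff {m : ℕ} {β γ : ℕ → Fin n} :
    takeSeq m β = takeSeq m γ ↔ ∀ t < m, β t = γ t := by
  simp [takeSeq, List.map_inj_left]

lemma dropSeq_succ (m : ℕ) (β : ℕ → Fin n) : dropSeq (m + 1) β = dropSeq m (shiftSeq β) := by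
  funext t; simp [dropSeq, shiftSeq, Nat.add_assoc]

lemma appendSeq_takeSeq_dropSeq (m : ℕ) (β : ℕ → Fin n) :
    appendSeq (takeSeq m β) (dropSeq m β) = β := by
  funext t
  rw [appendSeq_apply]
  split_ifs with h
  · simp
  · simp only [length_takeSeq, dropSeq] at h ⊢
    congr 1; omega

lemma TailEq.refl (α : ℕ → Fin n) : TailEq n α α := ⟨0, 0, fun _ => rfl⟩

lemma TailEq.symm {β γ : ℕ → Fin n} (h : TailEq n β γ) : TailEq n γ β :=
  let ⟨m, k, h⟩ := h; ⟨k, m, fun t => (h t).symm⟩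

lemma TailEq.consSeq {α β : ℕ → Fin n} (i : Fin n) (h : TailEq n β α) :
    TailEq n (consSeq i β) α :=
  let ⟨m, k, h⟩ := h; ⟨m + 1, k, fun t => by rw [Nat.add_right_comm]; exact h t⟩

lemma TailEq.appendSeq {α β : ℕ → Fin n} (l : List (Fin n)) (h : TailEq n β α) :
    TailEq n (appendSeq l β) α := by
  induction l with
  | nil => exact h
  | cons i l ih => exact ih.consSeq i

lemma TailEq.dropSeq {α β : ℕ → Fin n} (m : ℕ) (h : TailEq n β α) :
    TailEq n (dropSeq m β) α :=
  let ⟨M, k, h⟩ := h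
  ⟨M, k + m, fun t => by simpa [_root_.dropSeq, Nat.add_assoc, Nat.add_comm m] using h (t + m)⟩

lemma TailEq.shiftSeq {α β : ℕ → Fin n} (h : TailEq n β α) : TailEq n (shiftSeq β) α :=
  h.dropSeq 1

lemma TailEq.dropSeq_eq {β γ : ℕ → Fin n} (h : TailEq n β γ) :
    ∃ m k, _root_.dropSeq m β = _root_.dropSeq k γ :=
  let ⟨m, k, h⟩ := h; ⟨m, k, funext fun t => by simpa [_root_.dropSeq, Nat.add_comm] using h t⟩

lemma RationalSeq.of_dropSeq {α : ℕ → Fin n} {m : ℕ} (h : RationalSeq n (dropSeq m α)) :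
    RationalSeq n α :=
  let ⟨p, M, hp, h⟩ := h
  ⟨p, M + m, hp, fun t ht => by
    have := h (t - m) (by omega)
    simp only [dropSeq] at this
    rwa [Nat.sub_add_cancel (by omega), Nat.add_right_comm, Nat.sub_add_cancel (by omega)] at this⟩

lemma appendSeq_left_injective {s : ℕ → Fin n} (hs : ¬ RationalSeq n s) :
    Function.Injective (appendSeq · s) := by
  suffices key : ∀ p p' : List (Fin n), p.length < p'.length → appendSeq p s ≠ appendSeq p' s by
    intro p p' h
    rcases lt_trichotomy p.length p'.length with hlt | hl | hlt
    · exact absurd h (key p p' hlt)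
    · refine List.ext_getElem hl fun t h₁ h₂ => ?_
      simpa [appendSeq_apply, h₁, h₂] using congrFun h t
    · exact absurd h.symm (key p' p hlt)
  intro p p' hlt h
  refine hs ⟨p'.length - p.length, 0, by omega, fun w _ => ?_⟩
  have := congrFun h (p'.length + w)
  simp only [appendSeq_apply, show ¬ p'.length + w < p.length by omega,
    show ¬ p'.length + w < p'.length by omega, dite_false] at this
  convert this using 2 <;> omega

end InfinitePaths

namespace LRose

variable (K : Type) [Field K] {n : ℕ}

lemma gg_mul_ee (i j : Fin n) : gg K n i * ee K n j = if i = j then 1 else 0 := by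
  split_ifs with h
  · subst h
    rw [gg, ee, ← map_mul, RingQuot.mkAlgHom_rel K (RoseRel.ghostEdgeSame i), map_one]
  · rw [gg, ee, ← map_mul, RingQuot.mkAlgHom_rel K (RoseRel.ghostEdgeNe i j h), map_zero]

@[elab_as_elim]
lemma induction_on {C : LRose K n → Prop} (x : LRose K n)
    (scalar : ∀ r : K, C (algebraMap K _ r)) (edge : ∀ i, C (ee K n i))
    (ghostEdge : ∀ i, C (gg K n i)) (add : ∀ x y, C x → C y → C (x + y))
    (mul : ∀ x y, C x → C y → C (x * y)) : C x := by
  obtain ⟨x, rfl⟩ := RingQuot.mkAlgHom_surjective K (RoseRel K n) x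
  induction x using FreeAlgebra.induction with
  | grade0 r => rw [AlgHom.commutes]; exact scalar r
  | grade1 z => cases z with
    | e i => exact edge i
    | g i => exact ghostEdge i
  | mul x y hx hy => rw [map_mul]; exact mul _ _ hx hy
  | add x y hx hy => rw [map_add]; exact add _ _ hx hy

noncomputable def path (l : List (Fin n)) : LRose K n := (l.map (ee K n)).prod

noncomputable def ghost (l : List (Fin n)) : LRose K n := (l.reverse.map (gg K n)).prod

@[simp] lemma path_nil : path K ([] : List (Fin n)) = 1 := rfl

@[simp] lemma ghost_nil : ghost K ([] : List (Fin n)) = 1 := rfl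

lemma path_cons (i : Fin n) (l : List (Fin n)) : path K (i :: l) = ee K n i * path K l := by
  simp [path]

lemma ghost_cons (i : Fin n) (l : List (Fin n)) : ghost K (i :: l) = ghost K l * gg K n i := by
  simp [ghost]

lemma path_append (l l' : List (Fin n)) : path K (l ++ l') = path K l * path K l' := by
  simp [path]

lemma gg_mul_path_cons (i j : Fin n) (l : List (Fin n)) :
    gg K n i * path K (j :: l) = if i = j then path K l else 0 := by
  rw [path_cons, ← mul_assoc, gg_mul_ee]
  split_ifs <;> simp

lemma ghost_mul_path_append (q r : List (Fin n)) : ghost K q * path K (q ++ r) = path K r := by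
  induction q with
  | nil => simp
  | cons i q ih => rw [ghost_cons, List.cons_append, mul_assoc, gg_mul_path_cons, if_pos rfl, ih]

/-- The paper's `ε_m`, with `α 0` in the role of its `e_{i_1}`. -/
noncomputable def eps (α : ℕ → Fin n) (m : ℕ) : LRose K n :=
  path K (takeSeq m α) * ghost K (takeSeq m α)

noncomputable def epsIdeal (α : ℕ → Fin n) : Submodule (LRose K n) (LRose K n) :=
  Submodule.span (LRose K n) (Set.range fun m => eps K α m - eps K α (m + 1))

noncomputable def pathGhostSpan (α : ℕ → Fin n) (m : ℕ) : Submodule K (LRose K n) :=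
  Submodule.span K (Set.range fun p => path K p * ghost K (takeSeq m α))

variable {K} {α : ℕ → Fin n}

lemma eps_zero : eps K α 0 = 1 := by simp [eps, takeSeq]

lemma path_mul_ghost_mul_eps (p : List (Fin n)) {m m' : ℕ} (h : m ≤ m') :
    path K p * ghost K (takeSeq m α) * eps K α m' =
      path K (p ++ takeSeq (m' - m) (dropSeq m α)) * ghost K (takeSeq m' α) := by
  have hsplit := takeSeq_add m (m' - m) α
  rw [Nat.add_sub_cancel' h] at hsplit
  rw [eps, ← mul_assoc, mul_assoc (path K p), hsplit, ghost_mul_path_append, ← path_append,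
    ← hsplit]

lemma eps_mul_eps {m m' : ℕ} (h : m ≤ m') : eps K α m * eps K α m' = eps K α m' := by
  rw [eps, path_mul_ghost_mul_eps _ h, ← takeSeq_add, Nat.add_sub_cancel' h, eps]

lemma sub_mul_eps_mem_epsIdeal (x : LRose K n) (m : ℕ) : x - x * eps K α m ∈ epsIdeal K α := by
  induction m with
  | zero => simp [eps_zero]
  | succ m ih =>
    have hgen : x * (eps K α m - eps K α (m + 1)) ∈ epsIdeal K α :=
      (epsIdeal K α).smul_mem x (Submodule.subset_span ⟨m, rfl⟩)
    simpa [mul_sub] using (epsIdeal K α).add_mem ih hgen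

lemma mul_eps_mem_pathGhostSpan {x : LRose K n} {m m' : ℕ} (hx : x ∈ pathGhostSpan K α m)
    (h : m ≤ m') : x * eps K α m' ∈ pathGhostSpan K α m' := by
  suffices pathGhostSpan K α m ≤
      (pathGhostSpan K α m').comap (LinearMap.mulRight K (eps K α m')) from this hx
  refine Submodule.span_le.mpr (Set.range_subset_iff.mpr fun p => ?_)
  simp only [SetLike.mem_coe, Submodule.mem_comap, LinearMap.mulRight_apply,
    path_mul_ghost_mul_eps p h]
  exact Submodule.subset_span ⟨_, rfl⟩

lemma ee_mul_mem_pathGhostSpan (i : Fin n) {x : LRose K n} {m : ℕ}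
    (hx : x ∈ pathGhostSpan K α m) : ee K n i * x ∈ pathGhostSpan K α m := by
  suffices pathGhostSpan K α m ≤
      (pathGhostSpan K α m).comap (LinearMap.mulLeft K (ee K n i)) from this hx
  refine Submodule.span_le.mpr (Set.range_subset_iff.mpr fun p => ?_)
  simp only [SetLike.mem_coe, Submodule.mem_comap, LinearMap.mulLeft_apply, ← mul_assoc,
    ← path_cons]
  exact Submodule.subset_span ⟨_, rfl⟩

lemma gg_mul_mul_eps_mem_pathGhostSpan (i : Fin n) {x : LRose K n} {m : ℕ}
    (hx : x ∈ pathGhostSpan K α m) :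
    gg K n i * x * eps K α (m + 1) ∈ pathGhostSpan K α (m + 1) := by
  suffices pathGhostSpan K α m ≤ (pathGhostSpan K α (m + 1)).comap
      ((LinearMap.mulRight K (eps K α (m + 1))).comp (LinearMap.mulLeft K (gg K n i))) from this hx
  refine Submodule.span_le.mpr (Set.range_subset_iff.mpr fun p => ?_)
  obtain ⟨j, q, hq⟩ : ∃ j q, p ++ takeSeq 1 (dropSeq m α) = j :: q :=
    List.exists_cons_of_ne_nil (by simp [takeSeq])
  simp only [SetLike.mem_coe, Submodule.mem_comap, LinearMap.comp_apply, LinearMap.mulLeft_apply,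
    LinearMap.mulRight_apply]
  rw [mul_assoc, path_mul_ghost_mul_eps p (Nat.le_add_right m 1),
    Nat.add_sub_cancel_left, hq, ← mul_assoc, gg_mul_path_cons]
  split_ifs
  · exact Submodule.subset_span ⟨_, rfl⟩
  · rw [zero_mul]; exact Submodule.zero_mem _

lemma mul_eps_mem_pathGhostSpan_of_le {x : LRose K n} {m m' : ℕ}
    (hx : x * eps K α m ∈ pathGhostSpan K α m) (h : m ≤ m') :
    x * eps K α m' ∈ pathGhostSpan K α m' := by
  simpa only [mul_assoc, eps_mul_eps h] using mul_eps_mem_pathGhostSpan hx h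

/-- Induction on `x`, for all `x * y` at once: left multiplication by a ghost edge raises the
required `m` by one. -/
lemma exists_mul_eps_mem_pathGhostSpan (x : LRose K n) :
    ∃ m, x * eps K α m ∈ pathGhostSpan K α m := by
  suffices ∀ y : LRose K n, (∃ m, y * eps K α m ∈ pathGhostSpan K α m) →
      ∃ m, x * y * eps K α m ∈ pathGhostSpan K α m by
    simpa using this 1 ⟨0, Submodule.subset_span ⟨[], by simp [eps_zero, takeSeq]⟩⟩
  induction x using induction_on K with
  | scalar r =>
    rintro y ⟨m, hm⟩
    refine ⟨m, ?_⟩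
    rw [← Algebra.smul_def, smul_mul_assoc]
    exact Submodule.smul_mem _ r hm
  | edge i =>
    rintro y ⟨m, hm⟩
    exact ⟨m, by rw [mul_assoc]; exact ee_mul_mem_pathGhostSpan i hm⟩
  | ghostEdge i =>
    rintro y ⟨m, hm⟩
    refine ⟨m + 1, ?_⟩
    rw [← eps_mul_eps (Nat.le_succ m), ← mul_assoc, mul_assoc (gg K n i)]
    exact gg_mul_mul_eps_mem_pathGhostSpan i hm
  | add x x' hx hx' =>
    intro y hy
    obtain ⟨m, hm⟩ := hx y hy
    obtain ⟨m', hm'⟩ := hx' y hy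
    refine ⟨max m m', ?_⟩
    rw [add_mul, add_mul]
    exact Submodule.add_mem _ (mul_eps_mem_pathGhostSpan_of_le hm (le_max_left ..))
      (mul_eps_mem_pathGhostSpan_of_le hm' (le_max_right ..))
  | mul x x' hx hx' =>
    intro y hy
    simpa only [mul_assoc] using hx _ (hx' y hy)

end LRose

structure IsChenBasis (K : Type) [Field K] {n : ℕ} {α : ℕ → Fin n} {V : Type} [AddCommGroup V]
    [Module (LRose K n) V] [Module K V] (b : Module.Basis {β : ℕ → Fin n // TailEq n β α} K V) :
    Prop where
  ee_smul : ∀ (i : Fin n) (β : {β : ℕ → Fin n // TailEq n β α}) (h : TailEq n (consSeq i β.1) α),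
    ee K n i • b β = b ⟨consSeq i β.1, h⟩
  gg_smul_of_eq : ∀ (i : Fin n) (β : {β : ℕ → Fin n // TailEq n β α}),
    β.1 0 = i → ∀ h : TailEq n (shiftSeq β.1) α, gg K n i • b β = b ⟨shiftSeq β.1, h⟩
  gg_smul_of_ne : ∀ (i : Fin n) (β : {β : ℕ → Fin n // TailEq n β α}),
    β.1 0 ≠ i → gg K n i • b β = 0

namespace IsChenBasis

open LRose

variable {K : Type} [Field K] {n : ℕ} {α : ℕ → Fin n}
  {V : Type} [AddCommGroup V] [Module (LRose K n) V] [Module K V]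
  {b : Module.Basis {β : ℕ → Fin n // TailEq n β α} K V} (hb : IsChenBasis K b)
include hb

lemma path_smul (l : List (Fin n)) (β : ℕ → Fin n) (h : TailEq n β α) :
    path K l • b ⟨β, h⟩ = b ⟨appendSeq l β, h.appendSeq l⟩ := by
  induction l with
  | nil => simp
  | cons i l ih => rw [path_cons, mul_smul, ih, hb.ee_smul]; rfl

lemma ghost_takeSeq_smul (m : ℕ) (β : ℕ → Fin n) (h : TailEq n β α) :
    ghost K (takeSeq m β) • b ⟨β, h⟩ = b ⟨dropSeq m β, h.dropSeq m⟩ := by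
  induction m generalizing β with
  | zero => simp [takeSeq]; rfl
  | succ m ih =>
    rw [takeSeq_succ, ghost_cons, mul_smul, hb.gg_smul_of_eq _ ⟨β, h⟩ rfl h.shiftSeq, ih]
    simp only [dropSeq_succ]

lemma ghost_smul_eq_zero (l : List (Fin n)) (β : ℕ → Fin n) (h : TailEq n β α)
    (hl : takeSeq l.length β ≠ l) : ghost K l • b ⟨β, h⟩ = 0 := by
  induction l generalizing β with
  | nil => simp [takeSeq] at hl
  | cons i l ih =>
    rw [ghost_cons, mul_smul]
    by_cases h0 : β 0 = i
    · rw [hb.gg_smul_of_eq _ ⟨β, h⟩ h0 h.shiftSeq, ih _ h.shiftSeq]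
      rintro hl'
      exact hl (by rw [List.length_cons, takeSeq_succ, h0, hl'])
    · rw [hb.gg_smul_of_ne _ ⟨β, h⟩ h0, smul_zero]

lemma eps_smul_of_takeSeq_eq {m : ℕ} (β : ℕ → Fin n) (h : TailEq n β α)
    (hm : takeSeq m β = takeSeq m α) : eps K α m • b ⟨β, h⟩ = b ⟨β, h⟩ := by
  simp only [eps, ← hm, mul_smul, hb.ghost_takeSeq_smul, hb.path_smul, appendSeq_takeSeq_dropSeq]

lemma eps_smul_of_takeSeq_ne {m : ℕ} (β : ℕ → Fin n) (h : TailEq n β α)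
    (hm : takeSeq m β ≠ takeSeq m α) : eps K α m • b ⟨β, h⟩ = 0 := by
  rw [eps, mul_smul, hb.ghost_smul_eq_zero _ _ _ (by simpa using hm), smul_zero]

lemma exists_smul_eq (β γ : ℕ → Fin n) (hβ : TailEq n β α) (hγ : TailEq n γ α)
    (h : TailEq n β γ) : ∃ a : LRose K n, a • b ⟨β, hβ⟩ = b ⟨γ, hγ⟩ := by
  obtain ⟨m, k, hmk⟩ := h.dropSeq_eq
  refine ⟨path K (takeSeq k γ) * ghost K (takeSeq m β), ?_⟩
  rw [mul_smul, hb.ghost_takeSeq_smul]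
  simp only [hmk, hb.path_smul, appendSeq_takeSeq_dropSeq]

theorem not_fg_epsIdeal (hn : 2 ≤ n) : ¬ (epsIdeal K α).FG := by
  intro hfg
  set F : ℕ → Submodule (LRose K n) (LRose K n) := fun M =>
    Submodule.span _ {x | ∃ m < M, x = eps K α m - eps K α (m + 1)}
  have hmono : Monotone F := fun M M' h =>
    Submodule.span_mono fun x ⟨m, hm, hx⟩ => ⟨m, by omega, hx⟩
  have hsup : epsIdeal K α ≤ sSup (Set.range F) := Submodule.span_le.mpr fun x ⟨m, hx⟩ =>
    le_iSup F (m + 1) (Submodule.subset_span ⟨m, by omega, hx.symm⟩)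
  obtain ⟨_, ⟨M, rfl⟩, hM⟩ :=
    (CompleteLattice.isCompactElement_iff_le_of_directed_sSup_le _ _).mp
      ((Submodule.fg_iff_compact _).mp hfg) _ (Set.range_nonempty F)
      (directedOn_range.mpr hmono.directed_le) hsup
  have : Nontrivial (Fin n) := Fin.nontrivial_iff_two_le.mpr hn
  obtain ⟨j, hj⟩ := exists_ne (α M)
  set β := Function.update α M j
  have hβ : TailEq n β α :=
    ⟨M + 1, M + 1, fun t => Function.update_of_ne (by omega) _ _⟩
  have htake : ∀ m, takeSeq m β = takeSeq m α ↔ m ≤ M := fun m => by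
    refine takeSeq_eq_takeSeq_iff.trans ⟨fun h => ?_, fun h t ht => ?_⟩
    · by_contra hlt
      exact hj (by simpa [β] using h M (by omega))
    · exact Function.update_of_ne (by omega) _ _
  have hker : F M ≤ LinearMap.ker (LinearMap.toSpanSingleton (LRose K n) V (b ⟨β, hβ⟩)) := by
    refine Submodule.span_le.mpr fun x ⟨m, hm, hx⟩ => ?_
    simp [hx, sub_smul, hb.eps_smul_of_takeSeq_eq β hβ ((htake _).mpr (by omega : m ≤ M)),
      hb.eps_smul_of_takeSeq_eq β hβ ((htake _).mpr (by omega : m + 1 ≤ M))]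
  have hgen := hker (hM (Submodule.subset_span ⟨M, rfl⟩))
  rw [LinearMap.mem_ker, LinearMap.toSpanSingleton_apply, sub_smul,
    hb.eps_smul_of_takeSeq_eq β hβ ((htake M).mpr le_rfl),
    hb.eps_smul_of_takeSeq_ne β hβ (by simp [htake]), sub_zero] at hgen
  exact b.ne_zero _ hgen

variable [IsScalarTower K (LRose K n) V]

lemma eq_zero_of_mem_pathGhostSpan (hirr : ¬ RationalSeq n α) {m : ℕ} {y : LRose K n}
    (hy : y ∈ pathGhostSpan K α m) (h : y • b ⟨α, .refl α⟩ = 0) : y = 0 := by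
  obtain ⟨c, rfl⟩ := Finsupp.mem_span_range_iff_exists_finsupp.mp hy
  have hvec : ∀ p, (path K p * ghost K (takeSeq m α)) • b ⟨α, .refl α⟩ =
      b ⟨appendSeq p (dropSeq m α), ((TailEq.refl α).dropSeq m).appendSeq p⟩ := fun p => by
    rw [mul_smul, hb.ghost_takeSeq_smul, hb.path_smul]
  have hli : LinearIndependent K fun p : List (Fin n) =>
      b ⟨appendSeq p (dropSeq m α), ((TailEq.refl α).dropSeq m).appendSeq p⟩ :=
    b.linearIndependent.comp _ fun p p' hpp' =>
      appendSeq_left_injective (fun hr => hirr hr.of_dropSeq) (congrArg Subtype.val hpp')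
  have hc : c = 0 := linearIndependent_iff.mp hli c <| by
    simp only [Finsupp.linearCombination_apply, ← hvec, ← smul_assoc, Finsupp.sum,
      ← Finset.sum_smul] at h ⊢
    exact h
  simp [hc]

theorem ker_toSpanSingleton (hirr : ¬ RationalSeq n α) :
    LinearMap.ker (LinearMap.toSpanSingleton (LRose K n) V (b ⟨α, .refl α⟩)) = epsIdeal K α := by
  have hfix : ∀ m, eps K α m • b ⟨α, .refl α⟩ = b ⟨α, .refl α⟩ := fun m =>
    hb.eps_smul_of_takeSeq_eq α (.refl α) rfl
  refine le_antisymm (fun x hx => ?_) (Submodule.span_le.mpr ?_)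
  · rw [LinearMap.mem_ker, LinearMap.toSpanSingleton_apply] at hx
    obtain ⟨m, hm⟩ := exists_mul_eps_mem_pathGhostSpan (α := α) x
    have hzero : x * eps K α m = 0 :=
      hb.eq_zero_of_mem_pathGhostSpan hirr hm (by rw [mul_smul, hfix, hx])
    simpa [hzero] using sub_mul_eps_mem_epsIdeal (α := α) x m
  · rintro _ ⟨m, rfl⟩
    simp [sub_smul, hfix]

lemma toSpanSingleton_surjective :
    Function.Surjective (LinearMap.toSpanSingleton (LRose K n) V (b ⟨α, .refl α⟩)) := by
  rw [← LinearMap.range_eq_top, ← LinearMap.span_singleton_eq_range, eq_top_iff]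
  intro x _
  have hspan : Submodule.span K (Set.range b) ≤
      (Submodule.span (LRose K n) {b ⟨α, .refl α⟩}).restrictScalars K := by
    refine Submodule.span_le.mpr (Set.range_subset_iff.mpr fun γ => ?_)
    obtain ⟨a, ha⟩ := hb.exists_smul_eq α γ.1 (.refl α) γ.2 γ.2.symm
    rw [SetLike.mem_coe, Submodule.restrictScalars_mem, ← ha]
    exact Submodule.smul_mem _ a (Submodule.mem_span_singleton_self _)
  exact hspan (b.mem_span x)

/-- The ghost of a prefix of `β` long enough to separate `β` from the rest of the support of `x`
kills every other basis vector of the support. -/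
lemma exists_smul_eq_of_ne_zero {x : V} (hx : x ≠ 0) :
    ∃ a : LRose K n, a • x = b ⟨α, .refl α⟩ := by
  classical
  set c := b.repr x
  obtain ⟨⟨β, hβ⟩, hβc⟩ : c.support.Nonempty :=
    Finsupp.support_nonempty_iff.mpr (by simpa [c] using hx)
  obtain ⟨m, hm⟩ : ∃ m, ∀ γ ∈ c.support, γ ≠ ⟨β, hβ⟩ → takeSeq m γ.1 ≠ takeSeq m β := by
    refine ((Filter.eventually_all_finset _).mpr fun γ _ => ?_).exists (f := Filter.atTop)
    by_cases hγ : γ = ⟨β, hβ⟩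
    · exact Filter.Eventually.of_forall fun _ h => absurd hγ h
    · obtain ⟨t, ht⟩ := Function.ne_iff.mp fun h => hγ (Subtype.ext h)
      exact Filter.eventually_atTop.mpr
        ⟨t + 1, fun m hm _ heq => ht (takeSeq_eq_takeSeq_iff.mp heq t (by omega))⟩
  have hghost : ghost K (takeSeq m β) • x = c ⟨β, hβ⟩ • b ⟨dropSeq m β, hβ.dropSeq m⟩ := by
    conv_lhs => rw [← b.linearCombination_repr x]
    rw [Finsupp.linearCombination_apply, Finsupp.sum, Finset.smul_sum,
      Finset.sum_eq_single_of_mem _ hβc]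
    · rw [smul_comm, hb.ghost_takeSeq_smul]
    · rintro ⟨γ, hγ⟩ hγc hne
      rw [smul_comm, hb.ghost_smul_eq_zero _ _ _ (by simpa using hm _ hγc hne), smul_zero]
  obtain ⟨a, ha⟩ := hb.exists_smul_eq (dropSeq m β) α (hβ.dropSeq m) (.refl α) (hβ.dropSeq m)
  refine ⟨a * algebraMap K _ (c ⟨β, hβ⟩)⁻¹ * ghost K (takeSeq m β), ?_⟩
  rw [mul_smul, mul_smul, hghost, algebraMap_smul, smul_smul,
    inv_mul_cancel₀ (Finsupp.mem_support_iff.mp hβc), one_smul, ha]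

theorem isSimpleModule : IsSimpleModule (LRose K n) V := by
  refine isSimpleModule_iff_toSpanSingleton_surjective.mpr
    ⟨⟨_, _, b.ne_zero ⟨α, .refl α⟩⟩, fun x hx => ?_⟩
  obtain ⟨a, ha⟩ := hb.exists_smul_eq_of_ne_zero hx
  intro y
  obtain ⟨c, rfl⟩ := hb.toSpanSingleton_surjective y
  exact ⟨c * a, by simp [mul_smul, ha]⟩

end IsChenBasis

theorem stmt18_general (K : Type) [Field K] (n : ℕ) (hn : 2 ≤ n)
    (α : ℕ → Fin n) (hirr : ¬ RationalSeq n α)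
    (φP φPinv : LRose K n →ₐ[K] LRose K n)
    (hinv : ∀ x, φP (φPinv x) = x ∧ φPinv (φP x) = x)
    -- the Chen module `V_{[α]}`:
    (V : Type) [AddCommGroup V] [Module (LRose K n) V]
    [Module K V] [IsScalarTower K (LRose K n) V]
    (b : Module.Basis {β : ℕ → Fin n // TailEq n β α} K V)
    (hactE : ∀ (i : Fin n) (β : {β : ℕ → Fin n // TailEq n β α})
      (h : TailEq n (consSeq i β.1) α),
        ee K n i • b β = b ⟨consSeq i β.1, h⟩)
    (hactG : ∀ (i : Fin n) (β : {β : ℕ → Fin n // TailEq n β α})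
      (h0 : β.1 0 = i) (h : TailEq n (shiftSeq β.1) α),
        gg K n i • b β = b ⟨shiftSeq β.1, h⟩)
    (hactG0 : ∀ (i : Fin n) (β : {β : ℕ → Fin n // TailEq n β α}),
      β.1 0 ≠ i → gg K n i • b β = 0) :
    -- the elements `ε_m = e_{i_1} ⋯ e_{i_m} e_{i_m}* ⋯ e_{i_1}*` (`ε_0 = v = 1`)
    ∀ eps : ℕ → LRose K n,
      (∀ m : ℕ, eps m =
        ((List.range m).map fun t => ee K n (α t)).prod *
          ((List.range m).reverse.map fun t => gg K n (α t)).prod) →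
    ∀ N : Submodule (LRose K n) (LRose K n),
      N = Submodule.span (LRose K n)
        {x : LRose K n | ∃ m : ℕ, x = φP (eps m) - φP (eps (m + 1))} →
      (∃ f : V →+ (LRose K n ⧸ N),
        Function.Bijective f ∧
        ∀ (a : LRose K n) (x : V), f (a • x) = φP a • f x) ∧
      IsSimpleModule (LRose K n) (LRose K n ⧸ N) ∧
      ¬ Module.FinitePresentation (LRose K n) (LRose K n ⧸ N) := by
  intro eps heps N hN
  obtain rfl : eps = LRose.eps K α := funext fun m => by
    simp [heps, LRose.eps, LRose.path, LRose.ghost, takeSeq, List.map_reverse, Function.comp_def]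
  have hb : IsChenBasis K b := ⟨hactE, hactG, hactG0⟩
  let σ : LRose K n ≃+* LRose K n := (AlgEquiv.ofAlgHom φP φPinv
    (AlgHom.ext fun x => (hinv x).1) (AlgHom.ext fun x => (hinv x).2)).toRingEquiv
  have := RingHomInvPair.of_ringEquiv σ
  have := RingHomInvPair.symm (σ : LRose K n →+* LRose K n) σ.symm
  have hNσ : (LRose.epsIdeal K α).map
      (σ.toSemilinearEquiv : LRose K n →ₛₗ[(σ : LRose K n →+* LRose K n)] LRose K n) = N := by
    rw [hN, LRose.epsIdeal, Submodule.map_span, ← Set.range_comp]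
    congr 1 with x
    exact exists_congr fun m => eq_comm.trans (iff_of_eq (congrArg (x = ·) (map_sub φP _ _)))
  let e₀ : (LRose K n ⧸ LRose.epsIdeal K α) ≃ₗ[LRose K n] V :=
    hb.ker_toSpanSingleton hirr ▸ LinearMap.quotKerEquivOfSurjective _ hb.toSpanSingleton_surjective
  let e₁ := Submodule.Quotient.equiv _ N σ.toSemilinearEquiv hNσ
  have := hb.isSimpleModule.congr e₀
  refine ⟨⟨(e₀.symm.toAddEquiv.trans e₁.toAddEquiv).toAddMonoidHom, AddEquiv.bijective _,
    fun a x => ?_⟩,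
    (isSimpleModule_iff _ _).mpr (Submodule.orderIsoMapComap e₁).symm.isSimpleOrder, fun hFP => ?_⟩
  · exact (congrArg e₁ (map_smul e₀.symm a x)).trans (e₁.map_smulₛₗ a _)
  · have hfg := Module.FinitePresentation.fg_ker N.mkQ N.mkQ_surjective
    rw [Submodule.ker_mkQ] at hfg
    exact hb.not_fg_epsIdeal hn ((Submodule.map_symm_eq_iff _).mpr hNσ ▸ hfg.map _)

/-- Let `P ∈ GL_n(K)` and let `α` be an irrational infinite path in
`R_n` in which every edge occurs infinitely often.  Let `V` be the Chen module
`V_{[α]}`: a `K`-vector space with basis the tail-equivalence class of `α`, with the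
standard `L_K(R_n)`-action.  Then the twisted module `V^P_{[α]} = V^{φ_{P^{-1}}}` is
isomorphic to `L_K(R_n) / ⊕_{m≥0} L_K(R_n)(φ_P(ε_m) − φ_P(ε_{m+1}))`, and it is a
simple left `L_K(R_n)`-module which is not finitely presented. -/
theorem stmt18 (K : Type) [Field K] (n : ℕ) (hn : 2 ≤ n)
    (α : ℕ → Fin n) (hirr : ¬ RationalSeq n α) (hrich : EdgeRich n α)
    (P : GL (Fin n) K)
    (φP φPinv : LRose K n →ₐ[K] LRose K n)
    (hφP : RPhiProps K n
      ((P : Matrix (Fin n) (Fin n) K).map (algebraMap K (LRose K n)))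
      ((((P⁻¹ : GL (Fin n) K) : Matrix (Fin n) (Fin n) K)).map (algebraMap K (LRose K n))) φP)
    (hφPinv : RPhiProps K n
      ((((P⁻¹ : GL (Fin n) K) : Matrix (Fin n) (Fin n) K)).map (algebraMap K (LRose K n)))
      ((P : Matrix (Fin n) (Fin n) K).map (algebraMap K (LRose K n))) φPinv)
    (hinv : ∀ x, φP (φPinv x) = x ∧ φPinv (φP x) = x)
    -- the Chen module `V_{[α]}`:
    (V : Type) [AddCommGroup V] [Module (LRose K n) V]
    [Module K V] [IsScalarTower K (LRose K n) V]
    (b : Module.Basis {β : ℕ → Fin n // TailEq n β α} K V)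
    (hactE : ∀ (i : Fin n) (β : {β : ℕ → Fin n // TailEq n β α})
      (h : TailEq n (consSeq i β.1) α),
        ee K n i • b β = b ⟨consSeq i β.1, h⟩)
    (hactG : ∀ (i : Fin n) (β : {β : ℕ → Fin n // TailEq n β α})
      (h0 : β.1 0 = i) (h : TailEq n (shiftSeq β.1) α),
        gg K n i • b β = b ⟨shiftSeq β.1, h⟩)
    (hactG0 : ∀ (i : Fin n) (β : {β : ℕ → Fin n // TailEq n β α}),
      β.1 0 ≠ i → gg K n i • b β = 0) :
    -- the elements `ε_m = e_{i_1} ⋯ e_{i_m} e_{i_m}* ⋯ e_{i_1}*` (`ε_0 = v = 1`)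
    ∀ eps : ℕ → LRose K n,
      (∀ m : ℕ, eps m =
        ((List.range m).map fun t => ee K n (α t)).prod *
          ((List.range m).reverse.map fun t => gg K n (α t)).prod) →
    ∀ N : Submodule (LRose K n) (LRose K n),
      N = Submodule.span (LRose K n)
        {x : LRose K n | ∃ m : ℕ, x = φP (eps m) - φP (eps (m + 1))} →
      (∃ f : V →+ (LRose K n ⧸ N),
        Function.Bijective f ∧
        ∀ (a : LRose K n) (x : V), f (a • x) = φP a • f x) ∧
      IsSimpleModule (LRose K n) (LRose K n ⧸ N) ∧
      ¬ Module.FinitePresentation (LRose K n) (LRose K n ⧸ N) :=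
  stmt18_general K n hn α hirr φP φPinv hinv V b hactE hactG hactG0
end
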